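/- arXiv:2112.04714 — 2 statements merged into one kernel-verified Lean document; each statement's English description precedes it below -/
import Mathlib

section
/- Let x ∈ (0,1] have Lüroth digits (aₙ) with lim inf Lⁿ(x) > 0. Then the asymptotic set AS_L(x) = {y ≠ x : |Lⁿ(x) - Lⁿ(y)| → 0} equals the set of y = ⟨b₁,b₂,...⟩ such that bₙ = aₙ for all sufficiently large n; in particular, AS_L(x) is countable. -/
/-- The first Lüroth digit of `x`: the unique integer `a ≥ 2` with
`1/a < x ≤ 1/(a-1)` (for `x ∈ (0,1]`). -/
noncomputable def lurothDigit (x : ℝ) : ℕ := ⌊1 / x⌋₊ + 1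

/-- The Lüroth map on `[0,1]`. -/
noncomputable def lurothMap (x : ℝ) : ℝ :=
  if x = 0 then 0
  else (lurothDigit x : ℝ) * ((lurothDigit x : ℝ) - 1) * x - ((lurothDigit x : ℝ) - 1)

/-- The Lüroth digit sequence of `x` (0-indexed: `lurothDigitSeq x n = a_{n+1}(x)`). -/
noncomputable def lurothDigitSeq (x : ℝ) (n : ℕ) : ℕ := lurothDigit (lurothMap^[n] x)

/-- The `n`-th term of the Lüroth series associated with the digit sequence `a`. -/
noncomputable def lurothTerm (a : ℕ → ℕ) (n : ℕ) : ℝ :=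
  (∏ j ∈ Finset.range n, (1 : ℝ) / ((a j : ℝ) * ((a j : ℝ) - 1))) * (1 / (a n : ℝ))

/-- The value of the Lüroth series with digit sequence `a`. -/
noncomputable def lurothVal (a : ℕ → ℕ) : ℝ := ∑' n, lurothTerm a n

/-- The finite Lüroth sum `⟨c₁, …, cₙ⟩`. -/
noncomputable def lurothFinSum (c : ℕ → ℕ) (n : ℕ) : ℝ := ∑ k ∈ Finset.range n, lurothTerm c k

/-- The fundamental interval of level `n` with digits `c`. -/
noncomputable def fundamentalInterval (n : ℕ) (c : ℕ → ℕ) : Set ℝ :=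
  {x | x ∈ Set.Ioc (0 : ℝ) 1 ∧ ∀ j < n, lurothDigitSeq x j = c j}

/-- The asymptotic set of `x` for the Lüroth map. -/
noncomputable def asymptoticSet (x : ℝ) : Set ℝ :=
  {y | y ∈ Set.Icc (0 : ℝ) 1 ∧ y ≠ x ∧
    Filter.Tendsto (fun n => |lurothMap^[n] x - lurothMap^[n] y|) Filter.atTop (nhds 0)}

/-! If `Lⁿx` stays away from `0`, the digits of `Lⁿx` stay bounded. Of two close points in
different cylinders, the larger one is close to the left endpoint of its cylinder, where `L`
vanishes; hence, along an asymptotic pair, different digits at time `n` would force `Lⁿ⁺¹x` to be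
small, so the digits of `x` and `y` eventually agree. Conversely, since `L` expands by a
factor `≥ 2` on each cylinder, eventually equal digits force `Lᴺx = Lᴺy`. Countability
follows because `L` is injective on each cylinder, hence countable-to-one. -/

open Filter Set Topology

lemma lurothDigit_two_le {x : ℝ} (hx : x ∈ Ioc 0 1) : 2 ≤ lurothDigit x := by
  have : 1 ≤ ⌊1 / x⌋₊ := Nat.le_floor <| by
    rw [Nat.cast_one, le_div_iff₀ hx.1]; linarith [hx.2]
  simpa [lurothDigit] using this

lemma one_le_lurothDigit (x : ℝ) : (1 : ℝ) ≤ lurothDigit x := by simp [lurothDigit]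

lemma lurothDigit_anti {u v : ℝ} (hu : 0 < u) (huv : u ≤ v) : lurothDigit v ≤ lurothDigit u :=
  Nat.add_le_add_right (Nat.floor_le_floor (one_div_le_one_div_of_le hu huv)) 1

lemma one_div_lurothDigit_lt {x : ℝ} (hx : 0 < x) : 1 / (lurothDigit x : ℝ) < x := by
  have h : 1 / x < lurothDigit x := by
    simpa [lurothDigit] using Nat.lt_floor_add_one (1 / x)
  rw [div_lt_iff₀ hx] at h
  rw [div_lt_iff₀ (Nat.cast_pos.mpr (Nat.succ_pos _))]
  linarith

lemma le_one_div_lurothDigit_sub_one {x : ℝ} (hx : x ∈ Ioc 0 1) :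
    x ≤ 1 / ((lurothDigit x : ℝ) - 1) := by
  have h : (lurothDigit x : ℝ) - 1 ≤ 1 / x := by
    simpa [lurothDigit] using Nat.floor_le (one_div_pos.mpr hx.1).le
  have h2 : (2 : ℝ) ≤ lurothDigit x := by exact_mod_cast lurothDigit_two_le hx
  rw [le_div_iff₀ hx.1] at h
  rw [le_div_iff₀ (by linarith)]
  linarith

lemma lurothMap_zero : lurothMap 0 = 0 := by simp [lurothMap]

lemma lurothMap_of_ne_zero {x : ℝ} (hx : x ≠ 0) :
    lurothMap x = lurothDigit x * ((lurothDigit x : ℝ) - 1) * x - ((lurothDigit x : ℝ) - 1) := by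
  simp [lurothMap, hx]

lemma mapsTo_lurothMap : MapsTo lurothMap (Ioc 0 1) (Ioc 0 1) := by
  intro x hx
  have h2 : (2 : ℝ) ≤ lurothDigit x := by exact_mod_cast lurothDigit_two_le hx
  have hlo := one_div_lurothDigit_lt hx.1
  have hhi := le_one_div_lurothDigit_sub_one hx
  rw [div_lt_iff₀ (by linarith)] at hlo
  rw [le_div_iff₀ (by linarith)] at hhi
  rw [lurothMap_of_ne_zero hx.1.ne']
  constructor <;> nlinarith

lemma iterate_lurothMap_mem_Ioc {x : ℝ} (hx : x ∈ Ioc 0 1) (n : ℕ) :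
    lurothMap^[n] x ∈ Ioc 0 1 :=
  mapsTo_lurothMap.iterate n hx

lemma lurothDigitSeq_iterate (x : ℝ) (m n : ℕ) :
    lurothDigitSeq (lurothMap^[m] x) n = lurothDigitSeq x (n + m) := by
  simp only [lurothDigitSeq, Function.iterate_add_apply]

lemma lurothMap_sub_of_lurothDigit_eq {u v : ℝ} (hu : u ≠ 0) (hv : v ≠ 0)
    (h : lurothDigit u = lurothDigit v) :
    lurothMap u - lurothMap v = lurothDigit u * ((lurothDigit u : ℝ) - 1) * (u - v) := by
  rw [lurothMap_of_ne_zero hu, lurothMap_of_ne_zero hv, ← h]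
  ring

lemma two_mul_abs_sub_le_of_lurothDigit_eq {u v : ℝ} (hu : u ∈ Ioc 0 1) (hv : v ∈ Ioc 0 1)
    (h : lurothDigit u = lurothDigit v) :
    2 * |u - v| ≤ |lurothMap u - lurothMap v| := by
  have h2 : (2 : ℝ) ≤ lurothDigit u := by exact_mod_cast lurothDigit_two_le hu
  rw [lurothMap_sub_of_lurothDigit_eq hu.1.ne' hv.1.ne' h, abs_mul,
    abs_of_nonneg (a := _ * _) (by nlinarith)]
  exact mul_le_mul_of_nonneg_right (by nlinarith) (abs_nonneg _)

lemma two_pow_mul_abs_sub_le {u v : ℝ} (hu : u ∈ Ioc 0 1) (hv : v ∈ Ioc 0 1) (k : ℕ)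
    (h : ∀ j < k, lurothDigitSeq u j = lurothDigitSeq v j) :
    2 ^ k * |u - v| ≤ |lurothMap^[k] u - lurothMap^[k] v| := by
  induction k with
  | zero => simp
  | succ k ih =>
    rw [Function.iterate_succ_apply', Function.iterate_succ_apply', pow_succ']
    calc 2 * 2 ^ k * |u - v| ≤ 2 * |lurothMap^[k] u - lurothMap^[k] v| := by
          rw [mul_assoc]; gcongr; exact ih fun j hj => h j (by omega)
      _ ≤ _ := two_mul_abs_sub_le_of_lurothDigit_eq (iterate_lurothMap_mem_Ioc hu k)
          (iterate_lurothMap_mem_Ioc hv k) (h k (by omega))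

lemma eq_of_lurothDigitSeq_eq {u v : ℝ} (hu : u ∈ Ioc 0 1) (hv : v ∈ Ioc 0 1)
    (h : ∀ n, lurothDigitSeq u n = lurothDigitSeq v n) : u = v := by
  have hbound (k : ℕ) : |u - v| ≤ (1 / 2) ^ k := by
    have hk := two_pow_mul_abs_sub_le hu hv k fun j _ => h j
    have h1 := iterate_lurothMap_mem_Ioc hu k
    have h2 := iterate_lurothMap_mem_Ioc hv k
    have : |lurothMap^[k] u - lurothMap^[k] v| ≤ 1 := by
      rw [abs_sub_le_iff]; constructor <;> linarith [h1.1, h1.2, h2.1, h2.2]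
    rw [div_pow, one_pow, le_div_iff₀ (by positivity)]
    linarith
  have : |u - v| ≤ 0 :=
    ge_of_tendsto' (tendsto_pow_atTop_nhds_zero_of_lt_one (by norm_num) (by norm_num)) hbound
  exact sub_eq_zero.mp (abs_nonpos_iff.mp this)

lemma iterate_eq_of_lurothDigitSeq_eq {x y : ℝ} (hx : x ∈ Ioc 0 1) (hy : y ∈ Ioc 0 1) {N : ℕ}
    (hN : ∀ n ≥ N, lurothDigitSeq y n = lurothDigitSeq x n) :
    lurothMap^[N] x = lurothMap^[N] y :=
  eq_of_lurothDigitSeq_eq (iterate_lurothMap_mem_Ioc hx N) (iterate_lurothMap_mem_Ioc hy N)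
    fun n => by simp only [lurothDigitSeq_iterate, hN (n + N) (by omega)]

lemma tendsto_abs_sub_iterate_of_lurothDigitSeq_eq {x y : ℝ} (hx : x ∈ Ioc 0 1)
    (hy : y ∈ Ioc 0 1) {N : ℕ} (hN : ∀ n ≥ N, lurothDigitSeq y n = lurothDigitSeq x n) :
    Tendsto (fun n => |lurothMap^[n] x - lurothMap^[n] y|) atTop (𝓝 0) := by
  refine tendsto_const_nhds.congr' ?_
  filter_upwards [eventually_ge_atTop N] with n hn
  obtain ⟨k, rfl⟩ := Nat.exists_eq_add_of_le' hn
  rw [Function.iterate_add_apply, Function.iterate_add_apply,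
    iterate_eq_of_lurothDigitSeq_eq hx hy hN, sub_self, abs_zero]

-- With `a`, `b` the digits of `u`, `v`: `v ≤ 1 / (b - 1) ≤ 1 / a`, so `L u = a (a - 1) (u - 1 / a) ≤ a (a - 1) (u - v)`.
lemma lurothMap_le_of_lt_of_lurothDigit_ne {u v : ℝ} (hv : v ∈ Ioc 0 1) (huv : v < u)
    (h : lurothDigit u ≠ lurothDigit v) :
    lurothMap u ≤ lurothDigit u * ((lurothDigit u : ℝ) - 1) * (u - v) := by
  have hlt : lurothDigit u < lurothDigit v :=
    lt_of_le_of_ne (lurothDigit_anti hv.1 huv.le) h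
  have ha := one_le_lurothDigit u
  have hb : (lurothDigit u : ℝ) + 1 ≤ lurothDigit v := by exact_mod_cast hlt
  have hbv : ((lurothDigit v : ℝ) - 1) * v ≤ 1 := by
    have := le_one_div_lurothDigit_sub_one hv
    rwa [le_div_iff₀ (by linarith), mul_comm] at this
  have hav : (lurothDigit u : ℝ) * v ≤ 1 := by nlinarith [hv.1]
  rw [lurothMap_of_ne_zero (hv.1.trans huv).ne']
  nlinarith [mul_nonneg (sub_nonneg.mpr ha) (sub_nonneg.mpr hav)]

lemma lurothMap_le_of_lurothDigit_ne {u v : ℝ} (hu : u ∈ Ioc 0 1) (hv : v ∈ Ioc 0 1)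
    (h : lurothDigit u ≠ lurothDigit v) :
    lurothMap u ≤ (lurothDigit u : ℝ) ^ 2 * |u - v| + |lurothMap u - lurothMap v| := by
  have ha := one_le_lurothDigit u
  rcases lt_trichotomy u v with huv | rfl | huv
  · have hb : (lurothDigit v : ℝ) ≤ lurothDigit u := by exact_mod_cast lurothDigit_anti hu.1 huv.le
    have hb1 := one_le_lurothDigit v
    have hLv := lurothMap_le_of_lt_of_lurothDigit_ne hu huv h.symm
    rw [abs_sub_comm u v, abs_of_pos (sub_pos.mpr huv)]
    have : (lurothDigit v : ℝ) * ((lurothDigit v : ℝ) - 1) ≤ (lurothDigit u : ℝ) ^ 2 := by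
      nlinarith
    nlinarith [mul_le_mul_of_nonneg_right this (sub_pos.mpr huv).le,
      le_abs_self (lurothMap u - lurothMap v)]
  · exact absurd rfl h
  · have hLu := lurothMap_le_of_lt_of_lurothDigit_ne hv huv h
    rw [abs_of_pos (sub_pos.mpr huv)]
    nlinarith [mul_nonneg (sub_nonneg.mpr ha) (sub_pos.mpr huv).le,
      abs_nonneg (lurothMap u - lurothMap v)]

lemma iterate_lurothMap_zero (n : ℕ) : lurothMap^[n] 0 = 0 :=
  Function.iterate_fixed lurothMap_zero n

lemma eventually_lurothDigitSeq_eq {x y ε : ℝ} (hx : x ∈ Ioc 0 1) (hy : y ∈ Ioc 0 1)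
    (hε : 0 < ε) (hxε : ∀ᶠ n in atTop, ε < lurothMap^[n] x)
    (hxy : Tendsto (fun n => |lurothMap^[n] x - lurothMap^[n] y|) atTop (𝓝 0)) :
    ∀ᶠ n in atTop, lurothDigitSeq y n = lurothDigitSeq x n := by
  set C : ℝ := (lurothDigit ε : ℝ) ^ 2
  have hsmall : Tendsto (fun n => C * |lurothMap^[n] x - lurothMap^[n] y|
      + |lurothMap^[n + 1] x - lurothMap^[n + 1] y|) atTop (𝓝 0) := by
    simpa using (hxy.const_mul C).add (hxy.comp (tendsto_add_atTop_nat 1))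
  filter_upwards [hxε, (tendsto_add_atTop_nat 1).eventually hxε,
    hsmall.eventually (gt_mem_nhds hε)] with n hn hn1 hsm
  by_contra hne
  have hdigit : (lurothDigit (lurothMap^[n] x) : ℝ) ^ 2 ≤ (lurothDigit ε : ℝ) ^ 2 := by
    gcongr; exact lurothDigit_anti hε hn.le
  have hL := lurothMap_le_of_lurothDigit_ne (iterate_lurothMap_mem_Ioc hx n)
    (iterate_lurothMap_mem_Ioc hy n) (Ne.symm hne)
  simp only [Function.iterate_succ_apply'] at hn1 hsm
  nlinarith [abs_nonneg (lurothMap^[n] x - lurothMap^[n] y)]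

lemma countable_inter_preimage_iterate {α : Type*} {f : α → α} {s : Set α} (hs : MapsTo f s s)
    (hf : ∀ w, (s ∩ f ⁻¹' {w}).Countable) (n : ℕ) (z : α) :
    (s ∩ f^[n] ⁻¹' {z}).Countable := by
  induction n generalizing z with
  | zero => exact (countable_singleton z).mono inter_subset_right
  | succ n ih =>
    refine ((ih z).biUnion fun w _ => hf w).mono fun y hy => mem_iUnion₂.mpr ?_
    exact ⟨f y, ⟨hs hy.1, by simpa [Function.iterate_succ_apply] using hy.2⟩, hy.1, rfl⟩

lemma countable_Ioc_inter_lurothMap_preimage (w : ℝ) :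
    (Ioc 0 1 ∩ lurothMap ⁻¹' {w}).Countable := by
  refine countable_iff_exists_injOn.mpr ⟨lurothDigit, fun u hu v hv h => ?_⟩
  have h2 : (2 : ℝ) ≤ lurothDigit u := by exact_mod_cast lurothDigit_two_le hu.1
  have hsub := lurothMap_sub_of_lurothDigit_eq hu.1.1.ne' hv.1.1.ne' h
  rw [hu.2, hv.2, sub_self, eq_comm] at hsub
  rcases mul_eq_zero.mp hsub with h0 | h0
  · nlinarith
  · exact sub_eq_zero.mp h0

/-- If `x ∈ (0,1]` has `liminf Lⁿ(x) > 0`, then `AS_L(x)` is the set of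
`y ≠ x` in `(0,1]` whose Lüroth digits eventually agree with those of `x`;
in particular `AS_L(x)` is countable. -/
theorem asymptoticSet_of_liminf_pos (x : ℝ) (hx : x ∈ Set.Ioc (0 : ℝ) 1)
    (hlim : 0 < Filter.atTop.liminf (fun n => lurothMap^[n] x)) :
    asymptoticSet x =
      {y | y ∈ Set.Ioc (0 : ℝ) 1 ∧ y ≠ x ∧
        ∃ N : ℕ, ∀ n ≥ N, lurothDigitSeq y n = lurothDigitSeq x n} ∧
    (asymptoticSet x).Countable := by
  obtain ⟨ε, hε, hxε⟩ : ∃ ε > 0, ∀ᶠ n in atTop, ε < lurothMap^[n] x :=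
    ⟨_, half_pos hlim, eventually_lt_of_lt_liminf (half_lt_self hlim)
      (isBoundedUnder_of ⟨0, fun n => (iterate_lurothMap_mem_Ioc hx n).1.le⟩)⟩
  have hset : asymptoticSet x = {y | y ∈ Set.Ioc (0 : ℝ) 1 ∧ y ≠ x ∧
      ∃ N : ℕ, ∀ n ≥ N, lurothDigitSeq y n = lurothDigitSeq x n} := by
    ext y
    constructor
    · rintro ⟨hy, hyx, hxy⟩
      have hy0 : y ≠ 0 := by
        rintro rfl
        obtain ⟨n, hn, hsmall⟩ := (hxε.and (hxy.eventually (gt_mem_nhds hε))).exists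
        rw [iterate_lurothMap_zero, sub_zero, abs_of_pos (hε.trans hn)] at hsmall
        linarith
      have hy' : y ∈ Ioc 0 1 := ⟨hy.1.lt_of_ne' hy0, hy.2⟩
      exact ⟨hy', hyx, eventually_atTop.mp (eventually_lurothDigitSeq_eq hx hy' hε hxε hxy)⟩
    · rintro ⟨hy, hyx, N, hN⟩
      exact ⟨Ioc_subset_Icc_self hy, hyx, tendsto_abs_sub_iterate_of_lurothDigitSeq_eq hx hy hN⟩
  refine ⟨hset, hset ▸ (countable_iUnion fun N => countable_inter_preimage_iterate
    mapsTo_lurothMap countable_Ioc_inter_lurothMap_preimage N (lurothMap^[N] x)).mono ?_⟩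
  rintro y ⟨hy, -, N, hN⟩
  exact mem_iUnion.mpr ⟨N, hy, (iterate_eq_of_lurothDigitSeq_eq hx hy hN).symm⟩
end

section
/- The Lüroth map is sensitive to initial conditions with sensitivity constant 1/2: there exists ε > 0 (namely ε = 1/2) such that for every x ∈ [0,1] and every δ > 0 there exist y ∈ [0,1] with |x - y| < δ and n ∈ ℕ with |Lⁿ(x) - Lⁿ(y)| ≥ 1/2. -/
noncomputable def invBranch (a : ℕ) (z : ℝ) : ℝ := z / ((a : ℝ) * ((a : ℝ) - 1)) + 1 / (a : ℝ)

lemma digit_prop {x : ℝ} (hx : x ∈ Set.Ioc (0:ℝ) 1) :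
    2 ≤ lurothDigit x ∧ ((lurothDigit x : ℝ) - 1) ≤ 1 / x ∧ 1 / x < lurothDigit x := by
  obtain ⟨hx0, hx1⟩ := hx
  have h1 : (1:ℝ) ≤ 1 / x := by rw [le_div_iff₀ hx0]; linarith
  have h0 : (0:ℝ) ≤ 1 / x := by linarith
  have hfl : 1 ≤ ⌊1/x⌋₊ := Nat.le_floor (by exact_mod_cast h1)
  refine ⟨by unfold lurothDigit; omega, ?_, ?_⟩
  · have := Nat.floor_le h0
    simp only [lurothDigit]
    push_cast
    linarith
  · have := Nat.lt_floor_add_one (1/x)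
    simp only [lurothDigit]
    push_cast
    linarith

lemma lurothMap_mem {x : ℝ} (hx : x ∈ Set.Ioc (0:ℝ) 1) : lurothMap x ∈ Set.Ioc (0:ℝ) 1 := by
  obtain ⟨hd2, hdl, hdu⟩ := digit_prop hx
  obtain ⟨hx0, hx1⟩ := hx
  have hA2 : (2:ℝ) ≤ (lurothDigit x : ℝ) := by exact_mod_cast hd2
  set A : ℝ := (lurothDigit x : ℝ) with hA
  have hb : (A - 1) * x ≤ 1 := by
    rw [div_lt_iff₀ hx0] at hdu
    rw [le_div_iff₀ hx0] at hdl
    linarith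
  have hc : 1 < A * x := by
    rw [div_lt_iff₀ hx0] at hdu
    linarith
  rw [lurothMap, if_neg hx0.ne']
  constructor
  · nlinarith
  · nlinarith

lemma lurothMap_iter_mem {x : ℝ} (hx : x ∈ Set.Ioc (0:ℝ) 1) (n : ℕ) :
    lurothMap^[n] x ∈ Set.Ioc (0:ℝ) 1 := by
  induction n with
  | zero => exact hx
  | succ n ih => rw [Function.iterate_succ_apply']; exact lurothMap_mem ih

lemma invBranch_mem {a : ℕ} (ha : 2 ≤ a) {z : ℝ} (hz : z ∈ Set.Ioc (0:ℝ) 1) :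
    invBranch a z ∈ Set.Ioc ((1:ℝ)/a) (1/((a:ℝ)-1)) := by
  have hA2 : (2:ℝ) ≤ (a:ℝ) := by exact_mod_cast ha
  have hA0 : (0:ℝ) < (a:ℝ) := by linarith
  have hA1 : (0:ℝ) < (a:ℝ) - 1 := by linarith
  obtain ⟨hz0, hz1⟩ := hz
  constructor
  · have : 0 < z / ((a:ℝ) * ((a:ℝ) - 1)) := div_pos hz0 (by positivity)
    simp only [invBranch]; linarith
  · have h1 : z / ((a:ℝ) * ((a:ℝ) - 1)) ≤ 1 / ((a:ℝ) * ((a:ℝ) - 1)) :=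
      div_le_div_of_nonneg_right hz1 (by positivity) |>.trans_eq rfl
    have h2 : 1 / ((a:ℝ) * ((a:ℝ) - 1)) + 1 / (a:ℝ) = 1 / ((a:ℝ) - 1) := by
      field_simp; ring
    simp only [invBranch]; linarith

lemma invBranch_digit {a : ℕ} (ha : 2 ≤ a) {z : ℝ} (hz : z ∈ Set.Ioc (0:ℝ) 1) :
    lurothDigit (invBranch a z) = a := by
  obtain ⟨hg1, hg2⟩ := invBranch_mem ha hz
  have hA2 : (2:ℝ) ≤ (a:ℝ) := by exact_mod_cast ha
  have hA0 : (0:ℝ) < (a:ℝ) := by linarith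
  have hA1 : (0:ℝ) < (a:ℝ) - 1 := by linarith
  have hg0 : 0 < invBranch a z := lt_trans (by positivity) hg1
  rw [le_div_iff₀ hA1] at hg2
  rw [div_lt_iff₀ hA0] at hg1
  have hl : ((a:ℝ) - 1) ≤ 1 / invBranch a z := by
    rw [le_div_iff₀ hg0]; nlinarith
  have hu : 1 / invBranch a z < (a:ℝ) := by
    rw [div_lt_iff₀ hg0]; nlinarith
  have hfloor : ⌊1 / invBranch a z⌋₊ = a - 1 := by
    rw [Nat.floor_eq_iff (by positivity)]
    have hcast : ((a - 1 : ℕ) : ℝ) = (a:ℝ) - 1 := by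
      push_cast [Nat.cast_sub (by omega : 1 ≤ a)]; ring
    rw [hcast]
    constructor
    · exact hl
    · linarith
  simp only [lurothDigit, hfloor]
  omega

lemma invBranch_map {a : ℕ} (ha : 2 ≤ a) {z : ℝ} (hz : z ∈ Set.Ioc (0:ℝ) 1) :
    lurothMap (invBranch a z) = z := by
  have hA2 : (2:ℝ) ≤ (a:ℝ) := by exact_mod_cast ha
  have hA0 : (0:ℝ) < (a:ℝ) := by linarith
  have hA1 : (0:ℝ) < (a:ℝ) - 1 := by linarith
  obtain ⟨hg1, _⟩ := invBranch_mem ha hz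
  have hg0 : 0 < invBranch a z := lt_trans (by positivity) hg1
  rw [lurothMap, if_neg hg0.ne', invBranch_digit ha hz]
  simp only [invBranch]
  field_simp
  ring

lemma luroth_surj (n : ℕ) : ∀ x ∈ Set.Ioc (0:ℝ) 1, ∀ z ∈ Set.Ioc (0:ℝ) 1,
    ∃ y ∈ Set.Ioc (0:ℝ) 1, lurothMap^[n] y = z ∧ |x - y| ≤ (1/2)^n := by
  induction n with
  | zero =>
    intro x hx z hz
    refine ⟨z, hz, rfl, ?_⟩
    rw [pow_zero, abs_sub_le_iff]
    constructor <;> [skip; skip] <;>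
      · obtain ⟨hx0, hx1⟩ := hx; obtain ⟨hz0, hz1⟩ := hz; linarith
  | succ n ih =>
    intro x hx z hz
    obtain ⟨y', hy', hmap, hdist⟩ := ih (lurothMap x) (lurothMap_mem hx) z hz
    set a := lurothDigit x with haa
    have ha : 2 ≤ a := (digit_prop hx).1
    have hA2 : (2:ℝ) ≤ (a:ℝ) := by exact_mod_cast ha
    have hA0 : (0:ℝ) < (a:ℝ) := by linarith
    have hA1 : (0:ℝ) < (a:ℝ) - 1 := by linarith
    have hmem := invBranch_mem ha hy'
    have hy0 : 0 < invBranch a y' := lt_trans (by positivity) hmem.1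
    have hy1 : invBranch a y' ≤ 1 := by
      refine hmem.2.trans ?_
      rw [div_le_one hA1]; linarith
    refine ⟨invBranch a y', ⟨hy0, hy1⟩, ?_, ?_⟩
    · rw [Function.iterate_succ_apply, invBranch_map ha hy', hmap]
    · have heq : x - invBranch a y' = (lurothMap x - y') / ((a:ℝ) * ((a:ℝ) - 1)) := by
        rw [lurothMap, if_neg hx.1.ne']
        simp only [invBranch]
        field_simp
        ring
      rw [heq, abs_div, abs_of_pos (by positivity : (0:ℝ) < (a:ℝ) * ((a:ℝ) - 1))]
      have h2 : (2:ℝ) ≤ (a:ℝ) * ((a:ℝ) - 1) := by nlinarith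
      calc |lurothMap x - y'| / ((a:ℝ) * ((a:ℝ) - 1))
          ≤ (1/2)^n / 2 := by
            apply div_le_div₀ (by positivity) hdist (by norm_num) h2
        _ = (1/2)^(n+1) := by ring

/-- The Lüroth map is sensitive to initial conditions with sensitivity
constant `1/2`. -/
theorem luroth_sensitive (x : ℝ) (hx : x ∈ Set.Icc (0 : ℝ) 1) (δ : ℝ) (hδ : 0 < δ) :
    ∃ y ∈ Set.Icc (0 : ℝ) 1, |x - y| < δ ∧
      ∃ n : ℕ, 1 / 2 ≤ |lurothMap^[n] x - lurothMap^[n] y| := by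
  obtain ⟨hx0, hx1⟩ := hx
  rcases eq_or_lt_of_le hx0 with h0 | hxpos
  · -- x = 0
    have hx0' : x = 0 := h0.symm
    have hiter0 : ∀ n : ℕ, lurothMap^[n] x = 0 := by
      intro n
      rw [hx0']
      exact Function.iterate_fixed (by simp [lurothMap]) n
    set c : ℝ := min δ 1 / 2 with hc
    have hc0 : 0 < c := by positivity
    have hc1 : c ≤ 1 := by
      have : min δ 1 ≤ 1 := min_le_right _ _
      simp only [hc]; linarith
    have hcδ : c ≤ δ / 2 := by
      have : min δ 1 ≤ δ := min_le_left _ _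
      simp only [hc]; linarith
    obtain ⟨n, hn⟩ := exists_pow_lt_of_lt_one (show (0:ℝ) < δ/2 by linarith)
      (show (1:ℝ)/2 < 1 by norm_num)
    obtain ⟨y, hy, hmap, hdist⟩ := luroth_surj n c ⟨hc0, hc1⟩ 1 ⟨one_pos, le_refl 1⟩
    refine ⟨y, ⟨hy.1.le, hy.2⟩, ?_, n, ?_⟩
    · have : |x - y| ≤ |x - c| + |c - y| := abs_sub_le _ _ _
      have h1 : |x - c| = c := by rw [hx0']; simp [abs_of_pos hc0]
      calc |x - y| ≤ |x - c| + |c - y| := abs_sub_le _ _ _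
        _ = c + |c - y| := by rw [h1]
        _ ≤ δ/2 + (1/2)^n := by linarith
        _ < δ/2 + δ/2 := by linarith
        _ = δ := by ring
    · rw [hiter0 n, hmap]
      norm_num
  · -- x > 0
    obtain ⟨n, hn⟩ := exists_pow_lt_of_lt_one hδ (show (1:ℝ)/2 < 1 by norm_num)
    have hxmem : x ∈ Set.Ioc (0:ℝ) 1 := ⟨hxpos, hx1⟩
    have hw := lurothMap_iter_mem hxmem n
    set w := lurothMap^[n] x with hww
    by_cases hle : w ≤ 1/2
    · obtain ⟨y, hy, hmap, hdist⟩ := luroth_surj n x hxmem 1 ⟨one_pos, le_refl 1⟩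
      refine ⟨y, ⟨hy.1.le, hy.2⟩, lt_of_le_of_lt hdist hn, n, ?_⟩
      rw [hmap, abs_sub_comm, abs_of_nonneg (by linarith [hw.2] : (0:ℝ) ≤ 1 - w)]
      linarith
    · push_neg at hle
      obtain ⟨y, hy, hmap, hdist⟩ := luroth_surj n x hxmem (w - 1/2)
        ⟨by linarith, by linarith [hw.2]⟩
      refine ⟨y, ⟨hy.1.le, hy.2⟩, lt_of_le_of_lt hdist hn, n, ?_⟩
      rw [hmap]
      rw [abs_of_nonneg (by linarith : (0:ℝ) ≤ w - (w - 1/2))]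
      linarith
end
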